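/- Let P be a finite set of primitives and let E denote the set of derivations over P. Let X be a finite nonempty set of observations, let R be a type of representations, let f : X → R be an injective map, and let D : X → E be an injective derivation oracle whose image is subtree-closed, i.e. whenever D(x) = ⟨e_a, e_b⟩ for some x ∈ X, there exist x_a, x_b ∈ X with D(x_a) = e_a and D(x_b) = e_b. Then there exist a binary composition operation * : R → R → R and a map η : P → R such that I_η(D(x)) = f(x) for every x ∈ X. In particular, for any function δ : R → R → ℝ with δ(r, r) = 0 for all r, the tree reconstruction error δ(f(x), I_η(D(x))) is 0 for every x ∈ X. -/
import Mathlib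


inductive Deriv (P : Type*) : Type _
  | leaf (p : P) : Deriv P
  | node (l r : Deriv P) : Deriv P

namespace Deriv

variable {P : Type*} {R : Type*}

/-- Interpretation of a derivation given primitive assignments `η` and composition `comp`. -/
def interp (comp : R → R → R) (η : P → R) : Deriv P → R
  | leaf p => η p
  | node l r => comp (interp comp η l) (interp comp η r)

end Deriv

/-- If the derivation oracle is injective (with a subtree-closed image) and the model is
injective, then some composition operation and primitive assignment achieve zero tree
reconstruction error on every observation. -/
theorem injective_oracle_trivial_composition
    {P : Type*} [Fintype P] {X : Type*} [Fintype X] [Nonempty X] {R : Type*}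
    (f : X → R) (hf : Function.Injective f)
    (D : X → Deriv P) (hD : Function.Injective D)
    (hclosed : ∀ (x : X) (ea eb : Deriv P), D x = Deriv.node ea eb →
      ∃ xa xb : X, D xa = ea ∧ D xb = eb) :
    ∃ (comp : R → R → R) (η : P → R),
      (∀ x : X, Deriv.interp comp η (D x) = f x) ∧
      (∀ δ : R → R → ℝ, (∀ r : R, δ r r = 0) →
        ∀ x : X, δ (f x) (Deriv.interp comp η (D x)) = 0) := by
  classical
  set r0 : R := f (Classical.arbitrary X) with hr0
  set η : P → R := fun p =>
    if h : ∃ x, D x = Deriv.leaf p then f h.choose else r0 with hη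
  set comp : R → R → R := fun r r' =>
    if h : ∃ x, (∃ a, f a = r ∧ ∃ b, f b = r' ∧ D x = Deriv.node (D a) (D b))
    then f h.choose else r0 with hcomp
  have key : ∀ (e : Deriv P) (x : X), D x = e → Deriv.interp comp η e = f x := by
    intro e
    induction e with
    | leaf p =>
      intro x hx
      have h : ∃ y, D y = Deriv.leaf p := ⟨x, hx⟩
      have : η p = f h.choose := by simp [hη, dif_pos h]
      rw [Deriv.interp, this]
      congr 1
      exact hD (h.choose_spec.trans hx.symm)
    | node l r ihl ihr =>
      intro x hx
      obtain ⟨xa, xb, ha, hb⟩ := hclosed x l r hx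
      rw [Deriv.interp, ihl xa ha, ihr xb hb]
      have h : ∃ y, (∃ a, f a = f xa ∧ ∃ b, f b = f xb ∧ D y = Deriv.node (D a) (D b)) :=
        ⟨x, xa, rfl, xb, rfl, by rw [ha, hb, hx]⟩
      have hc : comp (f xa) (f xb) = f h.choose := by simp [hcomp, dif_pos h]
      rw [hc]
      obtain ⟨a, hfa, b, hfb, hy⟩ := h.choose_spec
      have : D h.choose = D x := by
        rw [hy, hf hfa, hf hfb, ha, hb, hx]
      exact congrArg f (hD this)
  refine ⟨comp, η, fun x => key (D x) x rfl, fun δ hδ x => ?_⟩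
  rw [key (D x) x rfl]; exact hδ _
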